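/- Consider a relay network with c layers and no intermediate randomness: for each j ∈ {1,…,c} let Y_{j,1},…,Y_{j,k_j} be random variables each taking values in a fixed finite set of cardinality d, write Ȳ_j = (Y_{j,1},…,Y_{j,k_j}), and assume H(Ȳ_j | Ȳ_{j−1}) = 0 for j = 2,…,c and H(M | Ȳ_c) = 0, where M is a finitely-valued random variable (the message). Then for integers r_j with 0 ≤ r_j ≤ k_j, max over all tuples (s_1,…,s_c) with s_j ⊆ {1,…,k_j} and |s_j| = r_j of I(M ; (Y_{j,i})_{j∈{1,…,c}, i∈s_j}) ≥ H(M) − (log d) · min_{1 ≤ j ≤ c} (k_j − r_j) · ∏_{i=j+1}^{c} (k_i − r_i)/k_i. -/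

import Mathlib

open Finset

/-- Probability that the finitely-valued random variable `X` takes value `x`,
with respect to the probability mass function `p` on the finite sample space `Ω`. -/
noncomputable def pmfProb {Ω : Type*} [Fintype Ω] {α : Type*} [Fintype α] [DecidableEq α]
    (p : Ω → ℝ) (X : Ω → α) (x : α) : ℝ :=
  ∑ ω, if X ω = x then p ω else 0

/-- Shannon entropy (natural logarithm) of the random variable `X`. -/
noncomputable def entH {Ω : Type*} [Fintype Ω] {α : Type*} [Fintype α] [DecidableEq α]
    (p : Ω → ℝ) (X : Ω → α) : ℝ :=
  ∑ x, Real.negMulLog (pmfProb p X x)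

/-- Conditional Shannon entropy `H(X|Y) = H(X,Y) - H(Y)`. -/
noncomputable def condH {Ω : Type*} [Fintype Ω] {α β : Type*} [Fintype α] [DecidableEq α]
    [Fintype β] [DecidableEq β] (p : Ω → ℝ) (X : Ω → α) (Y : Ω → β) : ℝ :=
  entH p (fun ω => (X ω, Y ω)) - entH p Y

/-- Mutual information `I(X;Y) = H(X) + H(Y) - H(X,Y)`. -/
noncomputable def mutInfo {Ω : Type*} [Fintype Ω] {α β : Type*} [Fintype α] [DecidableEq α]
    [Fintype β] [DecidableEq β] (p : Ω → ℝ) (X : Ω → α) (Y : Ω → β) : ℝ :=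
  entH p X + entH p Y - entH p (fun ω => (X ω, Y ω))

/-- The conditional probability mass function given an event `E`. -/
noncomputable def condPMF {Ω : Type*} [Fintype Ω] (p : Ω → ℝ) (E : Ω → Prop)
    [DecidablePred E] : Ω → ℝ :=
  fun ω => if E ω then p ω / (∑ ω' ∈ Finset.univ.filter E, p ω') else 0

/-!
Fix the layer `j₀` at which the minimum is attained and wiretap the layers greedily, one after
the other. By Han's inequality, the `r j` edges tapped in layer `j` can be chosen to reveal at
least the fraction `r j / k j` of the conditional entropy of that layer given everything tapped
before. Layer `j₀` has conditional entropy at most `k j₀ * log d`; each later layer is a function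
of the previous one, so its conditional entropy starts no higher and is then cut down by the
factor `(k j - r j) / k j`. The message is a function of the last layer, hence `H(M | tapped)` is
at most the resulting product, and `I(M ; tapped) = H(M) - H(M | tapped)`.
The analytic input is that conditioning reduces entropy, which follows from the log-sum
inequality.
-/

section Perspective

open Real

variable {ι : Type*} {t : Finset ι}

lemma sum_mul_negMulLog_div_sum {q : ι → ℝ} (hq : ∀ i ∈ t, 0 ≤ q i) :
    ∑ i ∈ t, (∑ j ∈ t, q j) * negMulLog (q i / ∑ j ∈ t, q j)
      = ∑ i ∈ t, negMulLog (q i) - negMulLog (∑ i ∈ t, q i) := by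
  rcases (sum_nonneg hq).eq_or_lt with ha | ha
  · have hq0 : ∀ i ∈ t, negMulLog (q i) = 0 := fun i hi => by
      rw [(sum_eq_zero_iff_of_nonneg hq).1 ha.symm i hi, negMulLog_zero]
    simp [← ha, sum_eq_zero hq0]
  generalize hA : ∑ j ∈ t, q j = a at ha ⊢
  have hsplit : ∀ i, a * negMulLog (q i / a) = negMulLog (q i) - q i / a * negMulLog a := by
    intro i
    rw [← mul_div_cancel₀ (q i) ha.ne', negMulLog_mul, mul_div_cancel_left₀ _ ha.ne']
    ring
  simp only [hsplit, sum_sub_distrib, ← sum_mul, ← sum_div, hA, div_self ha.ne', one_mul]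

/-- The log-sum inequality, stated for the perspective `(a, b) ↦ a * negMulLog (b / a)`. -/
lemma sum_mul_negMulLog_div_le {a b : ι → ℝ} (hb : ∀ i ∈ t, 0 ≤ b i) (hba : ∀ i ∈ t, b i ≤ a i) :
    ∑ i ∈ t, a i * negMulLog (b i / a i)
      ≤ (∑ i ∈ t, a i) * negMulLog ((∑ i ∈ t, b i) / ∑ i ∈ t, a i) := by
  have ha : ∀ i ∈ t, 0 ≤ a i := fun i hi => (hb i hi).trans (hba i hi)
  rcases (sum_nonneg ha).eq_or_lt with hA | hA
  · have ha0 : ∀ i ∈ t, a i * negMulLog (b i / a i) = 0 := fun i hi => by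
      rw [(sum_eq_zero_iff_of_nonneg ha).1 hA.symm i hi, zero_mul]
    rw [sum_eq_zero ha0, ← hA, zero_mul]
  generalize hAdef : ∑ i ∈ t, a i = A at hA ⊢
  have hA0 := hA.ne'
  have hmean : ∑ i ∈ t, (a i / A) • (b i / a i) = (∑ i ∈ t, b i) / A := by
    rw [sum_div]
    refine sum_congr rfl fun i hi => ?_
    rcases (ha i hi).eq_or_lt with h0 | h0
    · have : b i = 0 := le_antisymm (h0 ▸ hba i hi) (hb i hi)
      simp [← h0, this]
    · rw [smul_eq_mul]
      field_simp
  have jensen := concaveOn_negMulLog.le_map_sum (t := t) (w := fun i => a i / A)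
    (p := fun i => b i / a i) (fun i hi => div_nonneg (ha i hi) hA.le)
    (by rw [← sum_div, hAdef, div_self hA0])
    (fun i hi => Set.mem_Ici.2 (div_nonneg (hb i hi) (ha i hi)))
  rw [hmean] at jensen
  calc ∑ i ∈ t, a i * negMulLog (b i / a i)
      = A * ∑ i ∈ t, (a i / A) • negMulLog (b i / a i) := by
        rw [mul_sum]
        refine sum_congr rfl fun i _ => ?_
        rw [smul_eq_mul]
        field_simp
    _ ≤ A * negMulLog ((∑ i ∈ t, b i) / A) := mul_le_mul_of_nonneg_left jensen hA.le

end Perspective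

section Entropy

open Function Real

variable {Ω α β γ : Type*} [Fintype Ω] [Fintype α] [DecidableEq α] [Fintype β] [DecidableEq β]
  [Fintype γ] [DecidableEq γ] (p : Ω → ℝ)

lemma pmfProb_nonneg (hp : ∀ ω, 0 ≤ p ω) (X : Ω → α) (x : α) : 0 ≤ pmfProb p X x :=
  sum_nonneg fun ω _ => ite_nonneg (hp ω) le_rfl

lemma sum_pmfProb (X : Ω → α) : ∑ x, pmfProb p X x = ∑ ω, p ω := by
  simp only [pmfProb]
  rw [sum_comm]
  simp

lemma pmfProb_comp_eq_sum (X : Ω → α) (g : α → β) (y : β) :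
    pmfProb p (fun ω => g (X ω)) y = ∑ x with g x = y, pmfProb p X x := by
  simp only [pmfProb]
  rw [sum_comm]
  refine sum_congr rfl fun ω _ => ?_
  rw [sum_ite_eq]
  simp

lemma pmfProb_eq_sum_pmfProb_pair (X : Ω → α) (Y : Ω → β) (y : β) :
    pmfProb p Y y = ∑ x, pmfProb p (fun ω => (X ω, Y ω)) (x, y) := by
  simp only [pmfProb, Prod.mk.injEq]
  rw [sum_comm]
  refine sum_congr rfl fun ω _ => ?_
  by_cases h : Y ω = y <;> simp [h]

lemma pmfProb_pair_comp_eq_sum (X : Ω → α) (Y : Ω → β) (g : β → γ) (x : α) (z : γ) :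
    pmfProb p (fun ω => (X ω, g (Y ω))) (x, z)
      = ∑ y with g y = z, pmfProb p (fun ω => (X ω, Y ω)) (x, y) := by
  simp only [pmfProb, Prod.mk.injEq]
  rw [sum_comm]
  refine sum_congr rfl fun ω _ => ?_
  by_cases hx : X ω = x <;> simp [hx]

lemma pmfProb_pair_le (hp : ∀ ω, 0 ≤ p ω) (X : Ω → α) (Y : Ω → β) (x : α) (y : β) :
    pmfProb p (fun ω => (X ω, Y ω)) (x, y) ≤ pmfProb p Y y := by
  rw [pmfProb_eq_sum_pmfProb_pair p X Y y]
  exact single_le_sum (f := fun x => pmfProb p (fun ω => (X ω, Y ω)) (x, y))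
    (fun _ _ => pmfProb_nonneg p hp _ _) (mem_univ x)

lemma entH_comp_of_injective {f : α → β} (hf : Injective f) (X : Ω → α) :
    entH p (fun ω => f (X ω)) = entH p X := by
  refine (Fintype.sum_of_injective f hf _ _ (fun y hy => ?_) fun x => ?_).symm
  · rw [pmfProb, sum_eq_zero fun ω _ => if_neg fun h => hy ⟨X ω, h⟩, negMulLog_zero]
  · simp [pmfProb, hf.eq_iff]

lemma condH_eq_sum_mul_negMulLog (hp : ∀ ω, 0 ≤ p ω) (X : Ω → α) (Y : Ω → β) :
    condH p X Y = ∑ y, ∑ x, pmfProb p Y y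
      * negMulLog (pmfProb p (fun ω => (X ω, Y ω)) (x, y) / pmfProb p Y y) := by
  simp only [pmfProb_eq_sum_pmfProb_pair p X Y]
  rw [condH, entH, entH, Fintype.sum_prod_type_right, ← sum_sub_distrib]
  refine sum_congr rfl fun y _ => ?_
  rw [sum_mul_negMulLog_div_sum fun x _ => pmfProb_nonneg p hp _ _,
    pmfProb_eq_sum_pmfProb_pair p X Y y]

lemma condH_nonneg (hp : ∀ ω, 0 ≤ p ω) (X : Ω → α) (Y : Ω → β) : 0 ≤ condH p X Y := by
  rw [condH_eq_sum_mul_negMulLog p hp]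
  refine sum_nonneg fun y _ => sum_nonneg fun x _ => mul_nonneg (pmfProb_nonneg p hp Y y) ?_
  exact negMulLog_nonneg (div_nonneg (pmfProb_nonneg p hp _ _) (pmfProb_nonneg p hp Y y))
    (div_le_one_of_le₀ (pmfProb_pair_le p hp X Y x y) (pmfProb_nonneg p hp Y y))

theorem condH_le_condH_comp (hp : ∀ ω, 0 ≤ p ω) (X : Ω → α) (Y : Ω → β) (g : β → γ) :
    condH p X Y ≤ condH p X (fun ω => g (Y ω)) := by
  rw [condH_eq_sum_mul_negMulLog p hp, condH_eq_sum_mul_negMulLog p hp, sum_comm, sum_comm (γ := γ)]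
  refine sum_le_sum fun x _ => ?_
  rw [← sum_fiberwise univ g]
  refine sum_le_sum fun z _ => ?_
  rw [pmfProb_comp_eq_sum, pmfProb_pair_comp_eq_sum]
  exact sum_mul_negMulLog_div_le (fun y _ => pmfProb_nonneg p hp _ _)
    fun y _ => pmfProb_pair_le p hp X Y x y

lemma condH_pair_eq_add (X : Ω → α) (X' : Ω → β) (Y : Ω → γ) :
    condH p (fun ω => (X ω, X' ω)) Y = condH p X' Y + condH p X (fun ω => (X' ω, Y ω)) := by
  have hassoc := entH_comp_of_injective p (Equiv.prodAssoc α β γ).symm.injective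
    (fun ω => (X ω, X' ω, Y ω))
  simp only [Equiv.prodAssoc_symm_apply] at hassoc
  rw [condH, condH, condH, hassoc]
  ring

lemma condH_comp_left_of_injective {f : α → β} (hf : Injective f) (X : Ω → α) (Y : Ω → γ) :
    condH p (fun ω => f (X ω)) Y = condH p X Y := by
  have h := entH_comp_of_injective p (hf.prodMap injective_id) (fun ω => (X ω, Y ω))
  simp only [Prod.map_apply, id] at h
  rw [condH, condH, h]

lemma condH_comp_self (g : β → α) (Y : Ω → β) : condH p (fun ω => g (Y ω)) Y = 0 := by
  rw [condH, entH_comp_of_injective p (f := fun y => (g y, y)) (fun _ _ h => congrArg Prod.snd h),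
    sub_self]

lemma condH_comp_add_condH_pair (f : α → β) (X : Ω → α) (Y : Ω → γ) :
    condH p (fun ω => f (X ω)) Y + condH p X (fun ω => (f (X ω), Y ω)) = condH p X Y := by
  rw [← condH_pair_eq_add, condH_comp_left_of_injective p (f := fun x => (x, f x))
    (fun _ _ h => congrArg Prod.fst h)]

lemma condH_comp_le (hp : ∀ ω, 0 ≤ p ω) (f : α → β) (X : Ω → α) (Y : Ω → γ) :
    condH p (fun ω => f (X ω)) Y ≤ condH p X Y := by
  linarith [condH_comp_add_condH_pair p f X Y, condH_nonneg p hp X (fun ω => (f (X ω), Y ω))]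

lemma condH_le_condH_of_condH_eq_zero (hp : ∀ ω, 0 ≤ p ω) {X : Ω → α} {X' : Ω → β}
    (h : condH p X X' = 0) (Z : Ω → γ) : condH p X Z ≤ condH p X' Z :=
  calc condH p X Z ≤ condH p (fun ω => (X ω, X' ω)) Z :=
        condH_comp_le p hp Prod.fst (fun ω => (X ω, X' ω)) Z
    _ = condH p X' Z + condH p X (fun ω => (X' ω, Z ω)) := condH_pair_eq_add p X X' Z
    _ ≤ condH p X' Z + condH p X X' :=
      add_le_add le_rfl (condH_le_condH_comp p hp X (fun ω => (X' ω, Z ω)) Prod.fst)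
    _ = condH p X' Z := by rw [h, add_zero]

lemma entH_const_unit (hp1 : ∑ ω, p ω = 1) : entH p (fun _ : Ω => ()) = 0 := by
  simp [entH, pmfProb, hp1]

lemma condH_le_entH (hp : ∀ ω, 0 ≤ p ω) (hp1 : ∑ ω, p ω = 1) (X : Ω → α) (Y : Ω → β) :
    condH p X Y ≤ entH p X :=
  calc condH p X Y ≤ condH p X (fun _ => ()) := condH_le_condH_comp p hp X Y fun _ => ()
    _ = entH p X := by
      rw [condH, entH_const_unit p hp1, sub_zero]
      exact entH_comp_of_injective p (f := fun x => (x, ())) (fun _ _ h => congrArg Prod.fst h) X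

lemma entH_le_log_card (hp : ∀ ω, 0 ≤ p ω) (hp1 : ∑ ω, p ω = 1) (X : Ω → α) :
    entH p X ≤ log (Fintype.card α) := by
  rcases (Fintype.card α).eq_zero_or_pos with h | h
  · have := Fintype.card_eq_zero_iff.1 h
    simp [entH]
  have hn : (0 : ℝ) < (Fintype.card α : ℝ)⁻¹ := by positivity
  have jensen : ∑ x, (Fintype.card α : ℝ)⁻¹ • negMulLog (pmfProb p X x)
      ≤ negMulLog (∑ x, (Fintype.card α : ℝ)⁻¹ • pmfProb p X x) :=
    concaveOn_negMulLog.le_map_sum (fun _ _ => hn.le)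
      (by rw [sum_const, card_univ, nsmul_eq_mul, mul_inv_cancel₀ (Nat.cast_ne_zero.2 h.ne')])
      fun x _ => pmfProb_nonneg p hp X x
  rw [← smul_sum, ← smul_sum, sum_pmfProb, hp1, smul_eq_mul, smul_eq_mul, mul_one, negMulLog,
    log_inv, neg_mul_neg] at jensen
  exact le_of_mul_le_mul_left jensen hn

lemma condH_le_mul_log_card (hp : ∀ ω, 0 ≤ p ω) (hp1 : ∑ ω, p ω = 1) {n : ℕ}
    (X : Ω → Fin n → α) (Y : Ω → β) : condH p X Y ≤ n * log (Fintype.card α) := by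
  have h := (condH_le_entH p hp hp1 X Y).trans (entH_le_log_card p hp hp1 X)
  rwa [Fintype.card_fun, Fintype.card_fin, Nat.cast_pow, log_pow] at h

lemma condH_pi_le_sum (hp : ∀ ω, 0 ≤ p ω) {k : ℕ} (V : Ω → Fin k → α) (C : Ω → γ) :
    condH p V C ≤ ∑ i, condH p (fun ω => V ω i) C := by
  induction k with
  | zero =>
    rw [Subsingleton.elim V fun _ => Fin.elim0, Fin.sum_univ_zero]
    exact (condH_comp_self p (fun _ => Fin.elim0) C).le
  | succ k ih =>
    rw [← condH_comp_left_of_injective p (Fin.consEquiv fun _ => α).symm.injective,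
      Fin.sum_univ_succ, add_comm (condH p (fun ω => V ω 0) C)]
    exact (condH_pair_eq_add p _ _ C).trans_le
      (add_le_add (ih _) (condH_le_condH_comp p hp _ _ Prod.snd))

lemma mutInfo_eq_entH_sub_condH (X : Ω → α) (Y : Ω → β) :
    mutInfo p X Y = entH p X - condH p X Y := by
  rw [mutInfo, condH]
  ring

/-- By subadditivity some coordinate outside `s` carries at least the average share of the
remaining uncertainty, and by the chain rule revealing it removes that share. -/
lemma exists_mul_condH_insert_le (hp : ∀ ω, 0 ≤ p ω) {k : ℕ} (V : Ω → Fin k → α) (C : Ω → γ)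
    {s : Finset (Fin k)} (hs : sᶜ.Nonempty) :
    ∃ i ∉ s, (#sᶜ : ℝ) * condH p V (fun ω => (C ω, fun j : ↥(insert i s) => V ω j))
      ≤ (#sᶜ - 1) * condH p V (fun ω => (C ω, fun j : ↥s => V ω j)) := by
  have hrevealed : ∀ i ∈ s, condH p (fun ω => V ω i) (fun ω => (C ω, fun j : ↥s => V ω j)) = 0 :=
    fun i hi => condH_comp_self p (fun z : γ × (↥s → α) => z.2 ⟨i, hi⟩)
      fun ω => (C ω, fun j : ↥s => V ω j)
  have hsub : condH p V (fun ω => (C ω, fun j : ↥s => V ω j))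
      ≤ ∑ i ∈ sᶜ, condH p (fun ω => V ω i) (fun ω => (C ω, fun j : ↥s => V ω j)) :=
    (condH_pi_le_sum p hp V _).trans_eq
      (sum_subset (subset_univ sᶜ) fun i _ hi => hrevealed i (by simpa using hi)).symm
  obtain ⟨i, hi, hHi⟩ := exists_le_of_sum_le hs
    (f := fun _ => condH p V (fun ω => (C ω, fun j : ↥s => V ω j)))
    (g := fun i => #sᶜ * condH p (fun ω => V ω i) (fun ω => (C ω, fun j : ↥s => V ω j))) (by
      rw [sum_const, nsmul_eq_mul, ← mul_sum]
      exact mul_le_mul_of_nonneg_left hsub (Nat.cast_nonneg _))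
  have hdrop := condH_comp_add_condH_pair p (fun v => v i) V
    (fun ω => (C ω, fun j : ↥s => V ω j))
  have hmono := condH_le_condH_comp p hp V
    (fun ω => (C ω, fun j : ↥(insert i s) => V ω j))
    fun z => (z.2 ⟨i, mem_insert_self i s⟩, (z.1, fun j : ↥s => z.2 ⟨j.1, mem_insert_of_mem j.2⟩))
  dsimp only at hdrop hmono
  refine ⟨i, mem_compl.1 hi, ?_⟩
  linarith [mul_le_mul_of_nonneg_left hmono (Nat.cast_nonneg #sᶜ : (0 : ℝ) ≤ #sᶜ),
    congrArg ((#sᶜ : ℝ) * ·) hdrop]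

/-- Han's inequality, in greedy form. -/
theorem exists_card_eq_mul_condH_le (hp : ∀ ω, 0 ≤ p ω) {k : ℕ} (V : Ω → Fin k → α) (C : Ω → γ)
    {r : ℕ} (hr : r ≤ k) :
    ∃ s : Finset (Fin k), #s = r ∧
      (k : ℝ) * condH p V (fun ω => (C ω, fun i : ↥s => V ω i))
        ≤ (k - r) * condH p V C := by
  induction r with
  | zero =>
    refine ⟨∅, card_empty, ?_⟩
    rw [Nat.cast_zero, sub_zero]
    exact mul_le_mul_of_nonneg_left (condH_le_condH_comp p hp _ _ Prod.fst) (Nat.cast_nonneg k)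
  | succ r ih =>
    obtain ⟨s, hcard, hs⟩ := ih (Nat.le_of_succ_le hr)
    have hcompl : (#sᶜ : ℝ) = k - r := by
      rw [card_compl, hcard, Fintype.card_fin, Nat.cast_sub (Nat.le_of_succ_le hr)]
    have hpos : (0 : ℝ) < k - r := by
      rw [sub_pos]
      exact_mod_cast hr
    obtain ⟨i, hi, hstep⟩ := exists_mul_condH_insert_le p hp V C
      (s := s) (card_pos.1 (by rw [card_compl, hcard, Fintype.card_fin]; omega))
    rw [hcompl] at hstep
    refine ⟨insert i s, by rw [card_insert_of_notMem hi, hcard], ?_⟩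
    refine le_of_mul_le_mul_left ?_ hpos
    have hfac : (0 : ℝ) ≤ k - r - 1 := by
      rw [sub_sub, sub_nonneg]
      exact_mod_cast hr
    push_cast
    linarith [mul_le_mul_of_nonneg_left hstep (Nat.cast_nonneg k : (0 : ℝ) ≤ k),
      mul_le_mul_of_nonneg_left hs hfac]

end Entropy

namespace RelayNetwork

open Function Real

variable {Ω α β : Type*} [Fintype Ω] [Fintype α] [DecidableEq α] [Fintype β] [DecidableEq β]
  (p : Ω → ℝ) {k : ℕ → ℕ}

def layer (Y : (j : ℕ) → Fin (k j) → Ω → α) (j : ℕ) : Ω → Fin (k j) → α :=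
  fun ω i => Y j i ω

def wiretap (Y : (j : ℕ) → Fin (k j) → Ω → α) (c : ℕ) (s : (j : ℕ) → Finset (Fin (k j))) :
    Ω → (j : ↥(Icc 1 c)) → ↥(s j) → α :=
  fun ω j i => Y j i ω

lemma exists_card_eq_condH_layer_update_le (hp : ∀ ω, 0 ≤ p ω) (Y : (j : ℕ) → Fin (k j) → Ω → α)
    (s : (j : ℕ) → Finset (Fin (k j))) {c t : ℕ} (ht : t ∈ Icc 1 c) (hst : s t = ∅)
    (hkt : 0 < k t) {r : ℕ} (hr : r ≤ k t) :
    ∃ u : Finset (Fin (k t)), #u = r ∧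
      condH p (layer Y t) (wiretap Y c (update s t u))
        ≤ ((k t - r) / k t) * condH p (layer Y t) (wiretap Y c s) := by
  obtain ⟨u, hu, hhan⟩ := exists_card_eq_mul_condH_le p hp (layer Y t) (wiretap Y c s) hr
  have hsub : ∀ j, s j ⊆ update s t u j := by
    intro j
    rcases eq_or_ne j t with rfl | hj
    · simp [hst]
    · rw [update_of_ne hj]
  have hmono : condH p (layer Y t) (wiretap Y c (update s t u))
      ≤ condH p (layer Y t) (fun ω => (wiretap Y c s ω, fun i : ↥u => layer Y t ω i)) :=
    condH_le_condH_comp p hp (layer Y t) (wiretap Y c (update s t u))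
      fun F => (fun (j : ↥(Icc 1 c)) (i : ↥(s j)) => F j ⟨i, hsub j i.2⟩,
        fun i : ↥u => F ⟨t, ht⟩ ⟨i, by simp⟩)
  refine ⟨u, hu, ?_⟩
  rw [div_mul_eq_mul_div, le_div_iff₀ (Nat.cast_pos.2 hkt)]
  linarith [mul_le_mul_of_nonneg_left hmono (Nat.cast_nonneg (k t) : (0 : ℝ) ≤ k t)]

lemma mul_condH_layer_succ_le (hp : ∀ ω, 0 ≤ p ω) (hp1 : ∑ ω, p ω = 1) {d : ℕ}
    (hα : Fintype.card α = d) {r : ℕ → ℕ} {t j₀ : ℕ} (hkt : 0 < k (t + 1))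
    (hrt : r (t + 1) ≤ k (t + 1)) (Y : (j : ℕ) → Fin (k j) → Ω → α) (W : Ω → β)
    (hj₀ : j₀ ≤ t + 1) (hdet : j₀ ≤ t → condH p (layer Y (t + 1)) (layer Y t) = 0)
    (hbound : j₀ ≤ t → condH p (layer Y t) W
      ≤ log d * ((k j₀ - r j₀) * ∏ i ∈ Icc (j₀ + 1) t, ((k i : ℝ) - r i) / k i)) :
    ((k (t + 1) - r (t + 1)) / k (t + 1)) * condH p (layer Y (t + 1)) W
      ≤ log d * ((k j₀ - r j₀) * ∏ i ∈ Icc (j₀ + 1) (t + 1), ((k i : ℝ) - r i) / k i) := by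
  have hρ : (0 : ℝ) ≤ (k (t + 1) - r (t + 1)) / k (t + 1) :=
    div_nonneg (sub_nonneg.2 (Nat.cast_le.2 hrt)) (Nat.cast_nonneg _)
  rcases hj₀.eq_or_lt with rfl | hlt
  · rw [Icc_eq_empty_of_lt (Nat.lt_succ_self (t + 1)), prod_empty, mul_one, ← hα]
    calc ((k (t + 1) - r (t + 1)) / k (t + 1)) * condH p (layer Y (t + 1)) W
        ≤ ((k (t + 1) - r (t + 1)) / k (t + 1)) * (k (t + 1) * log (Fintype.card α)) :=
          mul_le_mul_of_nonneg_left (condH_le_mul_log_card p hp hp1 _ _) hρ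
      _ = log (Fintype.card α) * (k (t + 1) - r (t + 1)) := by
          field_simp [(Nat.cast_pos.2 hkt).ne']
  · rw [prod_Icc_succ_top (by omega)]
    calc ((k (t + 1) - r (t + 1)) / k (t + 1)) * condH p (layer Y (t + 1)) W
        ≤ ((k (t + 1) - r (t + 1)) / k (t + 1)) * condH p (layer Y t) W :=
          mul_le_mul_of_nonneg_left
            (condH_le_condH_of_condH_eq_zero p hp (hdet (by omega)) W) hρ
      _ ≤ ((k (t + 1) - r (t + 1)) / k (t + 1))
            * (log d * ((k j₀ - r j₀) * ∏ i ∈ Icc (j₀ + 1) t, ((k i : ℝ) - r i) / k i)) :=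
          mul_le_mul_of_nonneg_left (hbound (by omega)) hρ
      _ = _ := by ring

theorem exists_wiretap_condH_layer_le (hp : ∀ ω, 0 ≤ p ω) (hp1 : ∑ ω, p ω = 1) {c d : ℕ}
    (hα : Fintype.card α = d) {r : ℕ → ℕ} (hk : ∀ j ∈ Icc 1 c, 1 ≤ k j)
    (hr : ∀ j ∈ Icc 1 c, r j ≤ k j) (Y : (j : ℕ) → Fin (k j) → Ω → α)
    (hdet : ∀ t, 1 ≤ t → t < c → condH p (layer Y (t + 1)) (layer Y t) = 0)
    {j₀ : ℕ} (hj₀ : j₀ ∈ Icc 1 c) :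
    ∀ t ≤ c, ∃ s : (j : ℕ) → Finset (Fin (k j)),
      (∀ j ∈ Icc 1 c, j ≤ t → #(s j) = r j) ∧ (∀ j, t < j → s j = ∅) ∧
      (j₀ ≤ t → condH p (layer Y t) (wiretap Y c s)
        ≤ log d * ((k j₀ - r j₀) * ∏ i ∈ Icc (j₀ + 1) t, ((k i : ℝ) - r i) / k i)) := by
  have hj₀' := mem_Icc.1 hj₀
  intro t
  induction t with
  | zero =>
    refine fun _ => ⟨fun _ => ∅, fun j hj hj0 => ?_, fun _ _ => rfl, fun h => by omega⟩
    have := (mem_Icc.1 hj).1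
    omega
  | succ t ih =>
    intro htc
    obtain ⟨s, hcard, hempty, hbound⟩ := ih (by omega)
    have ht : t + 1 ∈ Icc 1 c := mem_Icc.2 ⟨by omega, htc⟩
    obtain ⟨u, hu, hstep⟩ := exists_card_eq_condH_layer_update_le p hp Y s ht
      (hempty _ (by omega)) (hk _ ht) (hr _ ht)
    refine ⟨update s (t + 1) u, fun j hj hjt => ?_, fun j hj => ?_, fun hj₀t => hstep.trans
      (mul_condH_layer_succ_le p hp hp1 hα (hk _ ht) (hr _ ht) Y _ hj₀t
        (fun h => hdet t (by omega) (by omega)) hbound)⟩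
    · rcases eq_or_ne j (t + 1) with rfl | hne
      · rwa [update_self]
      · rw [update_of_ne hne]
        exact hcard j hj (by omega)
    · rw [update_of_ne (by omega)]
      exact hempty j (by omega)

end RelayNetwork

theorem relay_network_leak_lower_bound_general {Ω α μ : Type*} [Fintype Ω] [Fintype α]
    [DecidableEq α] [Fintype μ] [DecidableEq μ]
    (p : Ω → ℝ) (hp : ∀ ω, 0 ≤ p ω) (hp1 : ∑ ω, p ω = 1)
    (c d : ℕ) (hc : 1 ≤ c) (hα : Fintype.card α = d)
    (k r : ℕ → ℕ) (hk : ∀ j ∈ Finset.Icc 1 c, 1 ≤ k j)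
    (hr : ∀ j ∈ Finset.Icc 1 c, r j ≤ k j)
    (Y : (j : ℕ) → Fin (k j) → Ω → α) (M : Ω → μ)
    (hdet : ∀ j, 2 ≤ j → j ≤ c →
      condH p (fun ω (i : Fin (k j)) => Y j i ω)
        (fun ω (i : Fin (k (j - 1))) => Y (j - 1) i ω) = 0)
    (hdec : condH p M (fun ω (i : Fin (k c)) => Y c i ω) = 0) :
    ∃ s : (j : ℕ) → Finset (Fin (k j)),
      (∀ j ∈ Finset.Icc 1 c, (s j).card = r j) ∧
      entH p M - Real.log d *
          (Finset.Icc 1 c).inf' (Finset.nonempty_Icc.mpr hc)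
            (fun j => ((k j : ℝ) - (r j : ℝ)) *
              ∏ i ∈ Finset.Icc (j + 1) c, ((k i : ℝ) - (r i : ℝ)) / (k i : ℝ))
        ≤ mutInfo p M
            (fun ω (j : ↥(Finset.Icc 1 c)) (i : ↥(s j.1)) => Y j.1 i.1 ω) := by
  obtain ⟨j₀, hj₀, hmin⟩ := exists_mem_eq_inf' (nonempty_Icc.mpr hc)
    fun j => ((k j : ℝ) - r j) * ∏ i ∈ Icc (j + 1) c, ((k i : ℝ) - r i) / k i
  obtain ⟨s, hcard, -, hbound⟩ := RelayNetwork.exists_wiretap_condH_layer_le p hp hp1 hα hk hr Y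
    (fun t _ htc => hdet (t + 1) (by omega) htc) hj₀ c le_rfl
  refine ⟨s, fun j hj => hcard j hj (mem_Icc.1 hj).2, ?_⟩
  have hleak : condH p M (RelayNetwork.wiretap Y c s)
      ≤ Real.log d * ((k j₀ - r j₀) * ∏ i ∈ Icc (j₀ + 1) c, ((k i : ℝ) - r i) / k i) :=
    (condH_le_condH_of_condH_eq_zero p hp hdec _).trans (hbound (mem_Icc.1 hj₀).2)
  rw [hmin, mutInfo_eq_entH_sub_condH]
  exact sub_le_sub_left hleak _

/-- paper's Theorem 4, condition (C2): relay network with `c` layers and no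
intermediate randomness. Layer `j` (for `j = 1,…,c`) carries edge variables
`Y j 1, …, Y j (k j)` with values in an alphabet of size `d`; each layer is a
deterministic function of the previous layer, and the message `M` is decodable from the
last layer. Then there is a tuple of eavesdropped edge sets `s j ⊆ {1,…,k j}` with
`|s j| = r j` such that
`I(M ; (Y_{j,i})_{j,i∈s j}) ≥ H(M) - log d * min_j (k j - r j) ∏_{i=j+1}^c (k i - r i)/(k i)`. -/
theorem relay_network_leak_lower_bound {Ω α μ : Type*} [Fintype Ω] [Fintype α]
    [DecidableEq α] [Fintype μ] [DecidableEq μ]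
    (p : Ω → ℝ) (hp : ∀ ω, 0 ≤ p ω) (hp1 : ∑ ω, p ω = 1)
    (c d : ℕ) (hc : 1 ≤ c) (hd : 1 ≤ d) (hα : Fintype.card α = d)
    (k r : ℕ → ℕ) (hk : ∀ j ∈ Finset.Icc 1 c, 1 ≤ k j)
    (hr : ∀ j ∈ Finset.Icc 1 c, r j ≤ k j)
    (Y : (j : ℕ) → Fin (k j) → Ω → α) (M : Ω → μ)
    (hdet : ∀ j, 2 ≤ j → j ≤ c →
      condH p (fun ω (i : Fin (k j)) => Y j i ω)
        (fun ω (i : Fin (k (j - 1))) => Y (j - 1) i ω) = 0)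
    (hdec : condH p M (fun ω (i : Fin (k c)) => Y c i ω) = 0) :
    ∃ s : (j : ℕ) → Finset (Fin (k j)),
      (∀ j ∈ Finset.Icc 1 c, (s j).card = r j) ∧
      entH p M - Real.log d *
          (Finset.Icc 1 c).inf' (Finset.nonempty_Icc.mpr hc)
            (fun j => ((k j : ℝ) - (r j : ℝ)) *
              ∏ i ∈ Finset.Icc (j + 1) c, ((k i : ℝ) - (r i : ℝ)) / (k i : ℝ))
        ≤ mutInfo p M
            (fun ω (j : ↥(Finset.Icc 1 c)) (i : ↥(s j.1)) => Y j.1 i.1 ω) :=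
  relay_network_leak_lower_bound_general p hp hp1 c d hc hα k r hk hr Y M hdet hdec
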